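/- Let n ≥ 1, γ > 0, and let P, P', Q, Q', R, R' be real n × n matrices and S, S' real symmetric positive semidefinite n × n matrices. Define T = (1/n)Tr(P − Q(S + γI)⁻¹R) and T' = (1/n)Tr(P' − Q'(S' + γI)⁻¹R'). Then |T − T'| ≤ ‖P − P'‖ + γ⁻¹‖Q − Q'‖·‖R‖ + γ⁻¹‖Q'‖·‖R − R'‖ + γ⁻²‖Q'‖·‖R'‖·‖S − S'‖, where ‖·‖ is the ℓ²→ℓ² operator norm. -/

import Mathlib

/-!
Write `A = (S + γI)⁻¹` and `A' = (S' + γI)⁻¹`. Since `S ⪰ 0`, `⟪x, (S + γI)x⟫ ≥ γ‖x‖²`, so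
`‖A‖, ‖A'‖ ≤ γ⁻¹`, and the resolvent identity `A - A' = A (S' - S) A'` gives
`‖A - A'‖ ≤ γ⁻²‖S - S'‖`. Telescoping `QAR - Q'A'R'` through `Q'AR` and `Q'AR'` bounds the
difference of the matrices inside the traces, and a normalized trace is bounded by the operator
norm because every diagonal entry is.
-/

/-- The `ℓ²→ℓ²` operator norm of a real `n × n` matrix. -/
noncomputable def opNorm {n : ℕ} (M : Matrix (Fin n) (Fin n) ℝ) : ℝ :=
  ‖LinearMap.toContinuousLinearMap (Matrix.toEuclideanLin M)‖

/-- The KCIT-type statistic `(1/n)Tr(P − Q(S + γI)⁻¹R)`. -/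
noncomputable def kcitStat {n : ℕ} (γ : ℝ) (P Q S R : Matrix (Fin n) (Fin n) ℝ) : ℝ :=
  (1 / (n : ℝ)) * (P - Q * (S + γ • (1 : Matrix (Fin n) (Fin n) ℝ))⁻¹ * R).trace

open Matrix
open scoped Matrix.Norms.L2Operator InnerProductSpace

lemma opNorm_eq_norm {n : ℕ} (M : Matrix (Fin n) (Fin n) ℝ) : opNorm M = ‖M‖ := rfl

theorem norm_mul_mul_sub_mul_mul_le {α : Type*} [NonUnitalSeminormedRing α]
    (q q' a a' r r' : α) :
    ‖q * a * r - q' * a' * r'‖ ≤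
      ‖q - q'‖ * ‖a‖ * ‖r‖ + ‖q'‖ * ‖a‖ * ‖r - r'‖ + ‖q'‖ * ‖a - a'‖ * ‖r'‖ := by
  have htelescope : q * a * r - q' * a' * r' =
      (q - q') * a * r + q' * a * (r - r') + q' * (a - a') * r' := by
    noncomm_ring
  rw [htelescope]
  exact (norm_add₃_le ..).trans (add_le_add_three (norm_mul₃_le ..) (norm_mul₃_le ..)
    (norm_mul₃_le ..))

namespace Matrix

section Trace

variable {𝕜 : Type*} [RCLike 𝕜]

theorem norm_apply_le_l2_opNorm {m n : Type*} [Fintype m] [Fintype n] [DecidableEq n]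
    (A : Matrix m n 𝕜) (i : m) (j : n) : ‖A i j‖ ≤ ‖A‖ := by
  have hcol := A.l2_opNorm_mulVec (EuclideanSpace.single j 1)
  rw [PiLp.norm_single, norm_one, mul_one] at hcol
  refine le_of_eq_of_le ?_ ((PiLp.norm_apply_le _ i).trans hcol)
  simp

variable {ι : Type*} [Fintype ι] [DecidableEq ι]

theorem norm_trace_le_card_mul_l2_opNorm (A : Matrix ι ι 𝕜) :
    ‖A.trace‖ ≤ Fintype.card ι * ‖A‖ :=
  calc ‖A.trace‖ ≤ ∑ i, ‖A i i‖ := norm_sum_le _ _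
    _ ≤ ∑ _i : ι, ‖A‖ := Finset.sum_le_sum fun i _ => A.norm_apply_le_l2_opNorm i i
    _ = Fintype.card ι * ‖A‖ := by simp

theorem norm_inv_card_mul_trace_le_l2_opNorm (A : Matrix ι ι 𝕜) :
    ‖(Fintype.card ι : 𝕜)⁻¹ * A.trace‖ ≤ ‖A‖ := by
  rw [norm_mul, norm_inv, RCLike.norm_natCast]
  rcases (Fintype.card ι).eq_zero_or_pos with hcard | hcard
  · simp [hcard]
  · rw [inv_mul_le_iff₀ (by exact_mod_cast hcard)]
    exact A.norm_trace_le_card_mul_l2_opNorm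

end Trace

namespace PosSemidef

theorem posDef_add_smul_one {ι : Type*} [DecidableEq ι] {S : Matrix ι ι ℝ} (hS : S.PosSemidef)
    {γ : ℝ} (hγ : 0 < γ) : (S + γ • 1).PosDef :=
  PosDef.posSemidef_add hS (by simpa [smul_one_eq_diagonal] using PosDef.diagonal fun _ => hγ)

variable {ι : Type*} [Fintype ι] [DecidableEq ι] {S : Matrix ι ι ℝ}

theorem mul_norm_le_norm_toEuclideanCLM_add_smul_one (hS : S.PosSemidef) (γ : ℝ)
    (x : EuclideanSpace ℝ ι) : γ * ‖x‖ ≤ ‖toEuclideanCLM (𝕜 := ℝ) (S + γ • 1) x‖ := by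
  have hquad : γ * ‖x‖ ^ 2 ≤ ⟪x, toEuclideanCLM (𝕜 := ℝ) (S + γ • 1) x⟫_ℝ := by
    have hSx : 0 ≤ ⟪x, toEuclideanCLM (𝕜 := ℝ) S x⟫_ℝ := by
      rw [inner_toEuclideanCLM]
      exact hS.dotProduct_mulVec_nonneg _
    simp only [map_add, map_smul, map_one, _root_.add_apply, _root_.smul_apply,
      one_apply_eq_self, inner_add_right, inner_smul_right, inner_self_eq_norm_sq_to_K,
      Real.ringHom_apply]
    linarith
  rcases (norm_nonneg x).eq_or_lt with hx | hx
  · simp [← hx]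
  · nlinarith [hquad.trans (real_inner_le_norm _ _)]

theorem l2_opNorm_inv_add_smul_one_le (hS : S.PosSemidef) {γ : ℝ} (hγ : 0 < γ) :
    ‖(S + γ • 1)⁻¹‖ ≤ γ⁻¹ := by
  refine ContinuousLinearMap.opNorm_le_bound _ (inv_nonneg.2 hγ.le) fun y => ?_
  set x := toEuclideanCLM (𝕜 := ℝ) (S + γ • 1)⁻¹ y
  have hx : toEuclideanCLM (𝕜 := ℝ) (S + γ • 1) x = y := by
    rw [← mul_apply_eq_comp, ← map_mul,
      mul_nonsing_inv _ ((isUnit_iff_isUnit_det _).1 (hS.posDef_add_smul_one hγ).isUnit),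
      map_one, one_apply_eq_self]
  have hlower := hS.mul_norm_le_norm_toEuclideanCLM_add_smul_one γ x
  rw [hx] at hlower
  rwa [inv_mul_eq_div, le_div_iff₀' hγ]

theorem l2_opNorm_inv_add_smul_one_sub_le (hS : S.PosSemidef) {S' : Matrix ι ι ℝ}
    (hS' : S'.PosSemidef) {γ : ℝ} (hγ : 0 < γ) :
    ‖(S + γ • 1)⁻¹ - (S' + γ • 1)⁻¹‖ ≤ γ⁻¹ ^ 2 * ‖S - S'‖ := by
  have hunit : IsUnit (S + γ • 1) ↔ IsUnit (S' + γ • 1) :=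
    iff_of_true (hS.posDef_add_smul_one hγ).isUnit (hS'.posDef_add_smul_one hγ).isUnit
  rw [inv_sub_inv hunit, add_sub_add_right_eq_sub, norm_sub_rev S]
  calc ‖(S + γ • 1)⁻¹ * (S' - S) * (S' + γ • 1)⁻¹‖
      ≤ ‖(S + γ • 1)⁻¹‖ * ‖S' - S‖ * ‖(S' + γ • 1)⁻¹‖ := norm_mul₃_le ..
    _ ≤ γ⁻¹ * ‖S' - S‖ * γ⁻¹ := by
      gcongr
      exacts [hS.l2_opNorm_inv_add_smul_one_le hγ, hS'.l2_opNorm_inv_add_smul_one_le hγ]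
    _ = γ⁻¹ ^ 2 * ‖S' - S‖ := by ring

end PosSemidef

end Matrix

theorem kcit_perturbation_general {n : ℕ} (γ : ℝ) (hγ : 0 < γ)
    (P P' Q Q' R R' S S' : Matrix (Fin n) (Fin n) ℝ)
    (hS : S.PosSemidef) (hS' : S'.PosSemidef) :
    |kcitStat γ P Q S R - kcitStat γ P' Q' S' R'| ≤
      opNorm (P - P') + γ⁻¹ * opNorm (Q - Q') * opNorm R
        + γ⁻¹ * opNorm Q' * opNorm (R - R')
        + γ⁻¹ ^ 2 * opNorm Q' * opNorm R' * opNorm (S - S') := by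
  set A := (S + γ • (1 : Matrix (Fin n) (Fin n) ℝ))⁻¹
  set A' := (S' + γ • (1 : Matrix (Fin n) (Fin n) ℝ))⁻¹
  have hA : ‖A‖ ≤ γ⁻¹ := hS.l2_opNorm_inv_add_smul_one_le hγ
  have hAA' : ‖A - A'‖ ≤ γ⁻¹ ^ 2 * ‖S - S'‖ := hS.l2_opNorm_inv_add_smul_one_sub_le hS' hγ
  have hdiff : kcitStat γ P Q S R - kcitStat γ P' Q' S' R' =
      (Fintype.card (Fin n) : ℝ)⁻¹ * ((P - P') - (Q * A * R - Q' * A' * R')).trace := by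
    simp only [kcitStat, trace_sub, Fintype.card_fin]
    ring
  simp only [opNorm_eq_norm]
  calc |kcitStat γ P Q S R - kcitStat γ P' Q' S' R'|
      ≤ ‖(P - P') - (Q * A * R - Q' * A' * R')‖ := by
        rw [hdiff, ← Real.norm_eq_abs]
        exact norm_inv_card_mul_trace_le_l2_opNorm _
    _ ≤ ‖P - P'‖ + (‖Q - Q'‖ * ‖A‖ * ‖R‖ + ‖Q'‖ * ‖A‖ * ‖R - R'‖ + ‖Q'‖ * ‖A - A'‖ * ‖R'‖) :=
        (norm_sub_le _ _).trans (add_le_add_right (norm_mul_mul_sub_mul_mul_le ..) _)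
    _ ≤ ‖P - P'‖ + (‖Q - Q'‖ * γ⁻¹ * ‖R‖ + ‖Q'‖ * γ⁻¹ * ‖R - R'‖
          + ‖Q'‖ * (γ⁻¹ ^ 2 * ‖S - S'‖) * ‖R'‖) := by gcongr
    _ = _ := by ring

/-- Deterministic perturbation inequality for the KCIT statistic:
`|T − T'| ≤ ‖P − P'‖ + γ⁻¹‖Q − Q'‖‖R‖ + γ⁻¹‖Q'‖‖R − R'‖ + γ⁻²‖Q'‖‖R'‖‖S − S'‖`. -/
theorem kcit_perturbation {n : ℕ} (hn : 1 ≤ n) (γ : ℝ) (hγ : 0 < γ)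
    (P P' Q Q' R R' S S' : Matrix (Fin n) (Fin n) ℝ)
    (hS : S.PosSemidef) (hS' : S'.PosSemidef) :
    |kcitStat γ P Q S R - kcitStat γ P' Q' S' R'| ≤
      opNorm (P - P') + γ⁻¹ * opNorm (Q - Q') * opNorm R
        + γ⁻¹ * opNorm Q' * opNorm (R - R')
        + γ⁻¹ ^ 2 * opNorm Q' * opNorm R' * opNorm (S - S') :=
  kcit_perturbation_general γ hγ P P' Q Q' R R' S S' hS hS'
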